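/- Let Q(t) = ∫_t^∞ (1/√(2π))·e^{−x²/2} dx be the standard Gaussian tail probability. Then for every t > 0 and every r > 0: (tr/(1+(tr)²)) · t^{r²} · (√(2π))^{r²−1} ≤ Q(tr)/Q(t)^{r²} ≤ (√(2π)·(1+t²)/t)^{r²−1} · (t²+1)/(r·t²). -/

import Mathlib

/-!
STATEMENT 19: For the standard Gaussian tail `Q(t) = ∫_t^∞ (1/√(2π)) e^{−x²/2} dx`,
for all `t > 0` and `r > 0`:
`(tr/(1+(tr)²)) · t^{r²} · (√(2π))^{r²−1} ≤ Q(tr)/Q(t)^{r²}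
  ≤ (√(2π)·(1+t²)/t)^{r²−1} · (t²+1)/(r·t²)`.
(Powers with real exponents are `Real.rpow`.)
-/

open scoped Real

noncomputable def gaussQ (t : ℝ) : ℝ :=
  ∫ x in Set.Ioi t, Real.exp (-x ^ 2 / 2) / Real.sqrt (2 * Real.pi)

/-!
With `φ` the standard Gaussian density, `φ' = -x φ` gives the Mills-ratio bounds
`s / (1 + s²) · φ s ≤ Q s ≤ φ s / s` for `s > 0`: integrate `φ ≤ x φ / s` on `(s, ∞)` for the
upper one, and `(-x φ / (1 + x²))' = φ · (1 - 2 / (1 + x²)²) ≤ φ` for the lower one.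
Since `φ (t r) = φ t ^ r² · √(2π) ^ (r² - 1)`, bounding `Q (t r)` by one side and `Q t ^ r²`
by the other, the powers of `φ t` cancel in the ratio.
-/

open MeasureTheory Set Filter Topology Real

noncomputable def gaussDensity (x : ℝ) : ℝ := exp (-x ^ 2 / 2) / √(2 * π)

lemma gaussDensity_pos (x : ℝ) : 0 < gaussDensity x := by
  unfold gaussDensity; positivity

lemma hasDerivAt_gaussDensity (x : ℝ) : HasDerivAt gaussDensity (-x * gaussDensity x) x := by
  have h : HasDerivAt (fun y : ℝ => -y ^ 2 / 2) (-x) x := by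
    refine ((hasDerivAt_pow 2 x).neg.div_const 2).congr_deriv ?_
    ring
  refine (h.exp.div_const √(2 * π)).congr_deriv ?_
  rw [gaussDensity]; ring

lemma integrable_gaussDensity : Integrable gaussDensity := by
  have h := (integrable_exp_neg_mul_sq (by norm_num : (0 : ℝ) < 1 / 2)).div_const √(2 * π)
  refine h.congr (Eventually.of_forall fun x => ?_)
  simp only [gaussDensity]; ring_nf

lemma tendsto_gaussDensity_atTop : Tendsto gaussDensity atTop (𝓝 0) := by
  have h : Tendsto (fun x : ℝ => -x ^ 2 / 2) atTop atBot := by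
    simp_rw [neg_div]
    exact tendsto_neg_atTop_atBot.comp
      ((tendsto_pow_atTop two_ne_zero).atTop_div_const (by norm_num : (0 : ℝ) < 2))
  unfold gaussDensity
  simpa only [zero_div, Function.comp_def] using (tendsto_exp_atBot.comp h).div_const √(2 * π)

lemma gaussDensity_mul (t r : ℝ) :
    gaussDensity (t * r) = gaussDensity t ^ (r ^ 2 : ℝ) * √(2 * π) ^ (r ^ 2 - 1 : ℝ) := by
  have hc : 0 < √(2 * π) := by positivity
  rw [gaussDensity, gaussDensity, div_rpow (exp_pos _).le hc.le, ← exp_mul, rpow_sub hc, rpow_one]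
  field_simp

lemma gaussQ_le_gaussDensity_div {s : ℝ} (hs : 0 < s) : gaussQ s ≤ gaussDensity s / s := by
  have hderiv : ∀ x ∈ Ici s, HasDerivAt (fun y => -gaussDensity y) (x * gaussDensity x) x :=
    fun x _ => (hasDerivAt_gaussDensity x).neg.congr_deriv (by ring)
  have hnonneg : ∀ x ∈ Ioi s, 0 ≤ x * gaussDensity x :=
    fun x hx => mul_nonneg (hs.trans hx).le (gaussDensity_pos x).le
  have htend : Tendsto (fun y => -gaussDensity y) atTop (𝓝 0) := by
    simpa using tendsto_gaussDensity_atTop.neg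
  have hint := integrableOn_Ioi_deriv_of_nonneg' hderiv hnonneg htend
  have hval : ∫ x in Ioi s, x * gaussDensity x = gaussDensity s := by
    simpa using integral_Ioi_of_hasDerivAt_of_nonneg' hderiv hnonneg htend
  calc gaussQ s ≤ ∫ x in Ioi s, x * gaussDensity x / s := by
        refine setIntegral_mono_on integrable_gaussDensity.integrableOn (hint.div_const s)
          measurableSet_Ioi fun x hx => ?_
        rw [le_div_iff₀ hs, mul_comm]
        exact mul_le_mul_of_nonneg_right (le_of_lt hx) (gaussDensity_pos x).le
    _ = gaussDensity s / s := by rw [integral_div, hval]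

lemma abs_one_sub_two_div_one_add_sq_sq_le_one (x : ℝ) : |1 - 2 / (1 + x ^ 2) ^ 2| ≤ 1 := by
  have hq : 0 ≤ 2 / (1 + x ^ 2) ^ 2 := by positivity
  have hq2 : 2 / (1 + x ^ 2) ^ 2 ≤ 2 :=
    div_le_self zero_le_two (one_le_pow₀ (le_add_of_nonneg_right (sq_nonneg x)))
  rw [abs_le]; constructor <;> linarith

lemma mul_gaussDensity_le_gaussQ (s : ℝ) : s / (1 + s ^ 2) * gaussDensity s ≤ gaussQ s := by
  set g : ℝ → ℝ := fun x => gaussDensity x * (1 - 2 / (1 + x ^ 2) ^ 2)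
  have hderiv : ∀ x ∈ Ici s,
      HasDerivAt (fun y => -y / (1 + y ^ 2) * gaussDensity y) (g x) x := by
    intro x _
    have hden : HasDerivAt (fun y : ℝ => 1 + y ^ 2) (2 * x) x := by
      simpa using (hasDerivAt_pow 2 x).const_add 1
    refine (((hasDerivAt_id' x).neg.div hden (by positivity)).mul
      (hasDerivAt_gaussDensity x)).congr_deriv ?_
    simp only [g, Pi.div_apply, Pi.neg_apply]
    field_simp
    ring
  have hg : Integrable g := by
    have hcont : Continuous fun x : ℝ => 1 - 2 / (1 + x ^ 2) ^ 2 :=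
      continuous_const.sub (continuous_const.div (by fun_prop) fun x => by positivity)
    exact integrable_gaussDensity.mul_bdd (c := 1) hcont.aestronglyMeasurable
      (Eventually.of_forall abs_one_sub_two_div_one_add_sq_sq_le_one)
  have htend : Tendsto (fun y => -y / (1 + y ^ 2) * gaussDensity y) atTop (𝓝 0) := by
    refine squeeze_zero_norm (fun x => ?_) tendsto_gaussDensity_atTop
    have hden : 0 < 1 + x ^ 2 := by positivity
    rw [norm_mul, norm_div, norm_neg, Real.norm_of_nonneg hden.le,
      Real.norm_of_nonneg (gaussDensity_pos x).le, Real.norm_eq_abs]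
    refine mul_le_of_le_one_left (gaussDensity_pos x).le ((div_le_one hden).2 ?_)
    nlinarith [abs_nonneg x, sq_abs x]
  have hval : ∫ x in Ioi s, g x = s / (1 + s ^ 2) * gaussDensity s := by
    rw [integral_Ioi_of_hasDerivAt_of_tendsto' hderiv hg.integrableOn htend]; ring
  rw [← hval]
  refine setIntegral_mono_on hg.integrableOn integrable_gaussDensity.integrableOn
    measurableSet_Ioi fun x _ => ?_
  exact mul_le_of_le_one_right (gaussDensity_pos x).le (sub_le_self _ (by positivity))

lemma gaussQ_pos {s : ℝ} (hs : 0 < s) : 0 < gaussQ s :=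
  (mul_pos (div_pos hs (by positivity)) (gaussDensity_pos s)).trans_le
    (mul_gaussDensity_le_gaussQ s)

theorem gaussian_tail_power_ratio_bounds (t r : ℝ) (ht : 0 < t) (hr : 0 < r) :
    t * r / (1 + (t * r) ^ 2) * t ^ (r ^ 2 : ℝ) * Real.sqrt (2 * Real.pi) ^ (r ^ 2 - 1 : ℝ)
        ≤ gaussQ (t * r) / gaussQ t ^ (r ^ 2 : ℝ) ∧
      gaussQ (t * r) / gaussQ t ^ (r ^ 2 : ℝ)
        ≤ (Real.sqrt (2 * Real.pi) * (1 + t ^ 2) / t) ^ (r ^ 2 - 1 : ℝ)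
            * ((t ^ 2 + 1) / (r * t ^ 2)) := by
  have hc : 0 < √(2 * π) := by positivity
  have hφ := gaussDensity_pos t
  have htr : 0 < t * r := mul_pos ht hr
  have hQ_upper : gaussQ t ^ (r ^ 2 : ℝ) ≤ (gaussDensity t / t) ^ (r ^ 2 : ℝ) :=
    rpow_le_rpow (gaussQ_pos ht).le (gaussQ_le_gaussDensity_div ht) (by positivity)
  have hQ_lower : (t / (1 + t ^ 2) * gaussDensity t) ^ (r ^ 2 : ℝ) ≤ gaussQ t ^ (r ^ 2 : ℝ) :=
    rpow_le_rpow (by positivity) (mul_gaussDensity_le_gaussQ t) (by positivity)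
  constructor
  · calc _ = t * r / (1 + (t * r) ^ 2) * gaussDensity (t * r)
            / (gaussDensity t / t) ^ (r ^ 2 : ℝ) := by
          rw [gaussDensity_mul, div_rpow hφ.le ht.le]
          field_simp
      _ ≤ _ := div_le_div₀ (gaussQ_pos htr).le (mul_gaussDensity_le_gaussQ _)
          (rpow_pos_of_pos (gaussQ_pos ht) _) hQ_upper
  · have hb : 0 < 1 + t ^ 2 := by positivity
    calc _ ≤ gaussDensity (t * r) / (t * r) / (t / (1 + t ^ 2) * gaussDensity t) ^ (r ^ 2 : ℝ) :=
          div_le_div₀ (div_pos (gaussDensity_pos _) htr).le (gaussQ_le_gaussDensity_div htr)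
            (rpow_pos_of_pos (mul_pos (div_pos ht hb) hφ) _) hQ_lower
      _ = _ := by
          rw [gaussDensity_mul, mul_rpow (div_pos ht hb).le hφ.le, div_rpow ht.le hb.le,
            mul_div_assoc √(2 * π), mul_rpow hc.le (div_pos hb ht).le, div_rpow hb.le ht.le]
          simp only [rpow_sub_one hc.ne', rpow_sub_one hb.ne', rpow_sub_one ht.ne']
          field_simp
          ring
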